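/- Let (Q^{(a)}_m) be a solution of the unrestricted Q-system of type D_r and let m ≥ 1. (i) If 2 ≤ a ≤ r−2, Q^{(a)}_{m−1} = 0 and Q^{(a−1)}_m = 0, then Q^{(a)}_m = 0. (ii) If Q^{(r−1)}_{m−1} = 0, Q^{(r)}_{m−1} = 0 and Q^{(r−2)}_m = 0, then Q^{(r−1)}_m = 0 and Q^{(r)}_m = 0. -/
import Mathlib


/-- The adjacency matrix of the Dynkin diagram `D_r` on the index set `{1, …, r}`:
`A a b = 1` iff (`|a - b| = 1` and `a, b ≤ r - 1`) or `{a, b} = {r - 2, r}`. -/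
def adjD (r a b : ℕ) : ℕ :=
  if ((a + 1 = b ∨ b + 1 = a) ∧ a ≤ r - 1 ∧ b ≤ r - 1)
      ∨ (a = r - 2 ∧ b = r) ∨ (a = r ∧ b = r - 2) then 1 else 0

/-- `Q : ℕ → ℕ → ℂ` is a solution of the unrestricted `Q`-system of type `D_r`:
`Q a 0 = 1` and `(Q a m)^2 = ∏_b (Q b m)^(A a b) + Q a (m-1) * Q a (m+1)`
for all `a ∈ {1, …, r}` and `m ≥ 1`. -/
def IsUnresQSysD (r : ℕ) (Q : ℕ → ℕ → ℂ) : Prop :=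
  (∀ a ∈ Finset.Icc 1 r, Q a 0 = 1) ∧
  ∀ a ∈ Finset.Icc 1 r, ∀ m : ℕ, 1 ≤ m →
    (Q a m) ^ 2 = (∏ b ∈ Finset.Icc 1 r, (Q b m) ^ adjD r a b) + Q a (m - 1) * Q a (m + 1)

/-- `Q` is a solution of the level-`k` restricted `Q`-system of type `D_r`:
`Q a 0 = 1`, `Q a k = 1`, and the `Q`-system recurrence holds for `1 ≤ m ≤ k - 1`. -/
def IsResQSysD (r k : ℕ) (Q : ℕ → ℕ → ℂ) : Prop :=
  (∀ a ∈ Finset.Icc 1 r, Q a 0 = 1) ∧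
  (∀ a ∈ Finset.Icc 1 r, Q a k = 1) ∧
  ∀ a ∈ Finset.Icc 1 r, ∀ m : ℕ, 1 ≤ m → m ≤ k - 1 →
    (Q a m) ^ 2 = (∏ b ∈ Finset.Icc 1 r, (Q b m) ^ adjD r a b) + Q a (m - 1) * Q a (m + 1)

/-- For a solution of the unrestricted `Q`-system of type `D_r` and `m ≥ 1`:
(i) if `2 ≤ a ≤ r-2`, `Q a (m-1) = 0` and `Q (a-1) m = 0`, then `Q a m = 0`;
(ii) if `Q (r-1) (m-1) = 0`, `Q r (m-1) = 0` and `Q (r-2) m = 0`, then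
`Q (r-1) m = 0` and `Q r m = 0`. -/

lemma qsysD_key (r : ℕ) (Q : ℕ → ℕ → ℂ) (hQ : IsUnresQSysD r Q) (m : ℕ) (hm : 1 ≤ m)
    (a b : ℕ) (ha : a ∈ Finset.Icc 1 r) (hb : b ∈ Finset.Icc 1 r)
    (hadj : adjD r a b = 1) (hbz : Q b m = 0) (haz : Q a (m - 1) = 0) : Q a m = 0 := by
  have h := hQ.2 a ha m hm
  rw [haz, zero_mul, add_zero] at h
  have hp : (∏ c ∈ Finset.Icc 1 r, (Q c m) ^ adjD r a c) = 0 :=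
    Finset.prod_eq_zero hb (by rw [hadj, pow_one, hbz])
  rw [hp] at h
  exact pow_eq_zero_iff (two_ne_zero) |>.mp h

theorem stmt14 (r : ℕ) (hr : 4 ≤ r) (Q : ℕ → ℕ → ℂ) (hQ : IsUnresQSysD r Q)
    (m : ℕ) (hm : 1 ≤ m) :
    (∀ a : ℕ, 2 ≤ a → a ≤ r - 2 → Q a (m - 1) = 0 → Q (a - 1) m = 0 → Q a m = 0) ∧
    (Q (r - 1) (m - 1) = 0 → Q r (m - 1) = 0 → Q (r - 2) m = 0 →
      Q (r - 1) m = 0 ∧ Q r m = 0) := by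
  obtain ⟨h0, hrec⟩ := hQ
  constructor
  · intro a ha2 har haz hbz
    refine qsysD_key r Q ⟨h0, hrec⟩ m hm a (a - 1)
      (Finset.mem_Icc.mpr ⟨by omega, by omega⟩) (Finset.mem_Icc.mpr ⟨by omega, by omega⟩)
      ?_ hbz haz
    unfold adjD
    rw [if_pos]
    exact Or.inl ⟨Or.inr (by omega), by omega, by omega⟩
  · intro h1 h2 h3
    constructor
    · refine qsysD_key r Q ⟨h0, hrec⟩ m hm (r - 1) (r - 2)
        (Finset.mem_Icc.mpr ⟨by omega, by omega⟩) (Finset.mem_Icc.mpr ⟨by omega, by omega⟩)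
        ?_ h3 h1
      unfold adjD
      rw [if_pos]
      exact Or.inl ⟨Or.inr (by omega), by omega, by omega⟩
    · refine qsysD_key r Q ⟨h0, hrec⟩ m hm r (r - 2)
        (Finset.mem_Icc.mpr ⟨by omega, by omega⟩) (Finset.mem_Icc.mpr ⟨by omega, by omega⟩)
        ?_ h3 h2
      unfold adjD
      rw [if_pos]
      exact Or.inr (Or.inr ⟨rfl, rfl⟩)
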